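/- Let A be a commutative ring, let y ∈ A be a unit, and let u ∈ A⟦t⟧ be a power series with u² = t² + y whose constant coefficient is a unit (so u is a unit of A⟦t⟧). Set σ := t·u⁻¹ ∈ A⟦t⟧ (a power series with zero constant term), and for n ≥ 1 let σ^{∘n} denote the n-fold composite σ ∘ σ ∘ ⋯ ∘ σ under substitution of power series. Then for every n ≥ 1 the identity (σ^{∘n})² · ((1 + y + ⋯ + y^{n−1})·t² + yⁿ) = t² holds in A⟦t⟧. -/

import Mathlib

open PowerSeries

/-- Substitution (composition) of formal power series: `pscomp f g` is `f ∘ g`,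
i.e. the series `∑ₖ fₖ gᵏ`, whose `n`-th coefficient is the (finitely supported,
when the constant coefficient of `g` is nilpotent) sum `∑ᶠ k, fₖ · (coeff n gᵏ)`. -/
noncomputable def pscomp {A : Type*} [CommRing A] (f g : PowerSeries A) : PowerSeries A :=
  PowerSeries.mk fun n => ∑ᶠ k : ℕ, (coeff k f) * (coeff n (g ^ k))

/-!
Substituting `f` is a ring homomorphism `A⟦X⟧ → A⟦X⟧` whenever `constantCoeff f = 0`, so the
relation `σ² · (X² + y) = X²`, which is `(σ u)² = X²`, transports to `(σ ∘ f)² · (f² + y) = f²`.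
Applied to `f = σ^{∘n}` this is the recursion `1/(σ^{∘(n+1)})² = 1 + y/(σ^{∘n})²` starting at
`1/X²`, solved by `1/(σ^{∘n})² = ((1 + y + ⋯ + y^{n-1}) X² + yⁿ) / X²`; the induction runs it
multiplied out, so that nothing needs to be inverted.
-/

section

variable {A : Type*} [CommRing A]

theorem pscomp_eq_subst (f : A⟦X⟧) {g : A⟦X⟧} (hg : HasSubst g) : pscomp f g = f.subst g := by
  ext n
  simp only [pscomp, coeff_mk, coeff_subst' hg, smul_eq_mul]

theorem constantCoeff_iterate_pscomp {σ : A⟦X⟧} (hσ : constantCoeff σ = 0) (n : ℕ) :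
    constantCoeff ((fun f => pscomp σ f)^[n] X) = 0 := by
  induction n with
  | zero => exact constantCoeff_X
  | succ n ih =>
    rw [Function.iterate_succ_apply', pscomp_eq_subst _ (.of_constantCoeff_zero' ih)]
    exact constantCoeff_subst_eq_zero ih σ hσ

theorem pscomp_sq_mul_add_C {σ f : A⟦X⟧} {y : A} (hσ : σ ^ 2 * (X ^ 2 + C y) = X ^ 2)
    (hf : constantCoeff f = 0) : pscomp σ f ^ 2 * (f ^ 2 + C y) = f ^ 2 := by
  have hs := HasSubst.of_constantCoeff_zero' hf
  have := congrArg (substAlgHom (R := A) hs) hσ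
  rw [C_eq_algebraMap] at this ⊢
  simpa only [map_mul, map_pow, map_add, substAlgHom_X, AlgHom.commutes, coe_substAlgHom,
    ← pscomp_eq_subst _ hs] using this

theorem iterate_pscomp_sq_mul {σ : A⟦X⟧} {y : A} (hσ0 : constantCoeff σ = 0)
    (hσ : σ ^ 2 * (X ^ 2 + C y) = X ^ 2) (n : ℕ) :
    ((fun f => pscomp σ f)^[n] X) ^ 2
      * (C (∑ i ∈ Finset.range n, y ^ i) * X ^ 2 + C (y ^ n)) = X ^ 2 := by
  induction n with
  | zero => simp
  | succ n ih =>
    set f := (fun f => pscomp σ f)^[n] X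
    have hstep := pscomp_sq_mul_add_C hσ (constantCoeff_iterate_pscomp hσ0 n)
    rw [Function.iterate_succ_apply', geom_sum_succ, pow_succ']
    simp only [map_add, map_mul, map_one, map_pow] at ih ⊢
    linear_combination (C (∑ i ∈ Finset.range n, y ^ i) * X ^ 2 + C y ^ n) * hstep
      - (pscomp σ f ^ 2 - 1) * ih

end

theorem iterate_identity_general {A : Type*} [CommRing A] (y : A)
    (u σ : PowerSeries A) (hu : u ^ 2 = X ^ 2 + C y)
    (hu0 : IsUnit (constantCoeff u)) (hσ : σ * u = X) :
    ∀ n : ℕ, 1 ≤ n →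
      ((fun f => pscomp σ f)^[n] X) ^ 2
        * (C (∑ i ∈ Finset.range n, y ^ i) * X ^ 2 + C (y ^ n)) = X ^ 2 := by
  have hσ0 : constantCoeff σ = 0 :=
    hu0.mul_left_eq_zero.mp (by rw [← map_mul, hσ, constantCoeff_X])
  have hσ2 : σ ^ 2 * (X ^ 2 + C y) = X ^ 2 := by rw [← hu, ← mul_pow, hσ]
  exact fun n _ => iterate_pscomp_sq_mul hσ0 hσ2 n

theorem iterate_identity {A : Type*} [CommRing A] (y : A) (hy : IsUnit y)
    (u σ : PowerSeries A) (hu : u ^ 2 = X ^ 2 + C y)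
    (hu0 : IsUnit (constantCoeff u)) (hσ : σ * u = X) :
    ∀ n : ℕ, 1 ≤ n →
      ((fun f => pscomp σ f)^[n] X) ^ 2
        * (C (∑ i ∈ Finset.range n, y ^ i) * X ^ 2 + C (y ^ n)) = X ^ 2 :=
  iterate_identity_general y u σ hu hu0 hσ
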